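/- arXiv:2509.14596 — 2 statements merged into one kernel-verified Lean document; each statement's English description precedes it below -/
import Mathlib

section
/- In the multidimensional Siegmund problem, for each nonempty A ⊆ [d]: (i) r_A and β^A are, respectively, the optimal value and the optimal solution of the convex program: maximize u Σ_{k∈A} θ_k − ℓ Σ_{k'∉A} θ_{k'} over θ ∈ ℝ^d subject to Λ(θ) ≤ 0, θ_k ≥ 0 for k ∈ A, and θ_{k'} ≤ 0 for k' ∉ A. (ii) For each γ ∈ ℝ^d with Λ(γ) ≤ 0, v_A(γ) is bounded below by the optimal value of: maximize u Σ_{k∈A} θ_k − ℓ Σ_{k'∉A} θ_{k'} over θ ∈ ℝ^d subject to Λ(θ − γ) ≤ 0, θ_k ≥ 0 for k ∈ A, and θ_{k'} ≤ 0 for k' ∉ A. -/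
open MeasureTheory ProbabilityTheory Filter Set Topology
open scoped ENNReal Pointwise RealInnerProductSpace Classical

noncomputable section

namespace Paper

abbrev Vec (d : ℕ) := EuclideanSpace ℝ (Fin d)

variable {d : ℕ}

/-- The cone generated by a set: `{λ x : λ > 0, x ∈ A}`. -/
def cone (A : Set (Vec d)) : Set (Vec d) := {y | ∃ l : ℝ, 0 < l ∧ ∃ x ∈ A, y = l • x}

variable {Ω : Type*} [MeasurableSpace Ω]

/-- The random walk `S_n = X_0 + ⋯ + X_{n-1}`. -/
def S (X : ℕ → Ω → Vec d) (n : ℕ) (ω : Ω) : Vec d := ∑ i ∈ Finset.range n, X i ω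

/-- The cumulant generating function `Λ(θ) = log E[exp⟪θ, X₁⟫]` (real-valued on its domain). -/
def cgf (P : Measure Ω) (X : ℕ → Ω → Vec d) (θ : Vec d) : ℝ :=
  Real.log (∫ ω, Real.exp ⟪θ, X 0 ω⟫ ∂P)

/-- `θ` belongs to the effective domain of `Λ`. -/
def InDom (P : Measure Ω) (X : ℕ → Ω → Vec d) (θ : Vec d) : Prop :=
  Integrable (fun ω => Real.exp ⟪θ, X 0 ω⟫) P

/-- The effective domain of the Legendre–Fenchel conjugate `Λ*`. -/
def domConj (P : Measure Ω) (X : ℕ → Ω → Vec d) : Set (Vec d) :=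
  {x | BddAbove ((fun θ => ⟪θ, x⟫ - cgf P X θ) '' {θ | InDom P X θ})}

/-- The rate function `I(x) = sup{θ·x : Λ(θ) ≤ 0}`, valued in `[0,∞]`. -/
def rate (P : Measure Ω) (X : ℕ → Ω → Vec d) (x : Vec d) : ℝ≥0∞ :=
  ⨆ θ ∈ {θ : Vec d | InDom P X θ ∧ cgf P X θ ≤ 0}, ENNReal.ofReal ⟪θ, x⟫

/-- `r_W = inf_{x ∈ W} I(x)`. -/
def rOf (P : Measure Ω) (X : ℕ → Ω → Vec d) (W : Set (Vec d)) : ℝ≥0∞ :=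
  ⨅ x ∈ W, rate P X x

/-- The first hitting time of `b • W` by the random walk. -/
def hit (X : ℕ → Ω → Vec d) (W : Set (Vec d)) (b : ℝ) (ω : Ω) : ℕ∞ :=
  ⨅ (n : ℕ) (_ : S X n ω ∈ b • W), (n : ℕ∞)

/-- The basic i.i.d. random walk hypotheses. -/
def IIDWalk (P : Measure Ω) (X : ℕ → Ω → Vec d) : Prop :=
  IsProbabilityMeasure P ∧ (∀ n, Measurable (X n)) ∧
    iIndepFun X P ∧ ∀ n, P.map (X n) = P.map (X 0)

/-- The exponentially tilted step distribution `μ_θ`. -/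
def tiltedLaw (P : Measure Ω) (X : ℕ → Ω → Vec d) (θ : Vec d) : Measure (Vec d) :=
  (P.map (X 0)).withDensity fun x => ENNReal.ofReal (Real.exp (⟪θ, x⟫ - cgf P X θ))

/-- `Q θ` is, for each `θ ∈ dom Λ`, a probability measure under which the increments
are i.i.d. with the tilted law `μ_θ`, i.e. `Q θ = ℙ_θ`. -/
def IsTiltedFamily (P : Measure Ω) (X : ℕ → Ω → Vec d) (Q : Vec d → Measure Ω) : Prop :=
  ∀ θ : Vec d, InDom P X θ →
    IsProbabilityMeasure (Q θ) ∧
    iIndepFun X (Q θ) ∧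
    ∀ n, (Q θ).map (X n) = tiltedLaw P X θ

/-- The likelihood ratio `L_θ(T) = exp(θ·S_T − T Λ(θ)) 1{T < ∞}`. -/
def LR (P : Measure Ω) (X : ℕ → Ω → Vec d) (θ : Vec d) (T : Ω → ℕ∞) (ω : Ω) : ℝ :=
  if T ω = ⊤ then 0
  else Real.exp (⟪θ, S X (T ω).toNat ω⟫ - ((T ω).toNat : ℝ) * cgf P X θ)

/-- `V_θ(x) = sup{α·x : Λ(θ) + Λ(α−θ) ≤ 0}`, with `sup ∅ = −∞`. -/
def Vfun (P : Measure Ω) (X : ℕ → Ω → Vec d) (θ x : Vec d) : EReal :=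
  ⨆ α ∈ {α : Vec d | InDom P X θ ∧ InDom P X (α - θ) ∧ cgf P X θ + cgf P X (α - θ) ≤ 0},
    ((⟪α, x⟫ : ℝ) : EReal)

/-- `v(W; θ) = inf_{x ∈ cl W} V_θ(x)`. -/
def vOf (P : Measure Ω) (X : ℕ → Ω → Vec d) (W : Set (Vec d)) (θ : Vec d) : EReal :=
  ⨅ x ∈ closure W, Vfun P X θ x

/-- The mixture measure `ℙ_Θ = |Θ|⁻¹ ∑_{θ∈Θ} ℙ_θ`. -/
def mix (Q : Vec d → Measure Ω) (Θ : Finset (Vec d)) : Measure Ω :=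
  (Θ.card : ℝ≥0∞)⁻¹ • ∑ θ ∈ Θ, Q θ

/-- Second moment `E_μ[f²]`. -/
def mom2 (μ : Measure Ω) (f : Ω → ℝ) : ℝ :=
  (∫⁻ ω, ENNReal.ofReal ((f ω) ^ 2) ∂μ).toReal

variable {J : ℕ}

/-- `τ_b^* = min_{j ∈ [J]} τ_b^j`. -/
def tauStar (X : ℕ → Ω → Vec d) (W : Fin J → Set (Vec d)) (b : ℝ) (ω : Ω) : ℕ∞ :=
  ⨅ j, hit X (W j) b ω

/-- The wrong-exit event `{τ_b^* < τ_b^0}`. -/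
def wrongExit (X : ℕ → Ω → Vec d) (W0 : Set (Vec d)) (W : Fin J → Set (Vec d)) (b : ℝ) :
    Set Ω :=
  {ω | tauStar X W b ω < hit X W0 b ω}

/-- The event `{τ_b^* = τ_b^j}`. -/
def exitAt (X : ℕ → Ω → Vec d) (W : Fin J → Set (Vec d)) (j : Fin J) (b : ℝ) : Set Ω :=
  {ω | tauStar X W b ω = hit X (W j) b ω}

/-- The estimator `Ŵ_b^j(θ)`. -/
def WhatJ (P : Measure Ω) (X : ℕ → Ω → Vec d) (W0 : Set (Vec d)) (W : Fin J → Set (Vec d))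
    (θ : Vec d) (j : Fin J) (b : ℝ) : Ω → ℝ :=
  Set.indicator (wrongExit X W0 W b ∩ exitAt X W j b)
    (fun ω => (LR P X θ (tauStar X W b) ω)⁻¹)

/-- The mixture estimator `Ŵ_b(Θ)`. -/
def WhatMix (P : Measure Ω) (X : ℕ → Ω → Vec d) (W0 : Set (Vec d)) (W : Fin J → Set (Vec d))
    (Θ : Finset (Vec d)) (b : ℝ) : Ω → ℝ :=
  Set.indicator (wrongExit X W0 W b)
    (fun ω => ((Θ.card : ℝ)⁻¹ * ∑ θ ∈ Θ, LR P X θ (tauStar X W b) ω)⁻¹)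

/-- Asymptotic efficiency of the proposal `ℙ_Θ` for estimating `ℙ(τ_b^* < τ_b^0)`. -/
def AsympEff (P : Measure Ω) (X : ℕ → Ω → Vec d) (W0 : Set (Vec d))
    (W : Fin J → Set (Vec d)) (Q : Vec d → Measure Ω) (Θ : Finset (Vec d)) : Prop :=
  Tendsto (fun b : ℝ =>
      Real.log (mom2 (mix Q Θ) (WhatMix P X W0 W Θ b)) /
        (2 * Real.log ((P (wrongExit X W0 W b)).toReal)))
    atTop (nhds 1)

/-- Condition (C1). -/
def C1 (P : Measure Ω) (X : ℕ → Ω → Vec d) (W : Fin J → Set (Vec d)) : Prop :=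
  ∃ δ > (0 : ℝ), ∀ j, cone (Metric.ball (∫ ω, X 0 ω ∂P) δ) ∩ W j = ∅

/-- Condition (C2). -/
def C2 (P : Measure Ω) (X : ℕ → Ω → Vec d) (W : Fin J → Set (Vec d)) : Prop :=
  IsOpen {θ : Vec d | InDom P X θ} ∧
    ∀ j, (interior (cone (domConj P X)) ∩ W j).Nonempty

/-- Condition (C3). -/
def C3 (W0 : Set (Vec d)) (W : Fin J → Set (Vec d)) : Prop :=
  (∀ j j', j ≠ j' → cone (W j) ∩ cone (W j') = ∅) ∧
  (∀ j, cone W0 ∩ cone (W j) = ∅) ∧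
  ∃ δ > (0 : ℝ), Metric.ball (0 : Vec d) δ ∩ W0 = ∅ ∧
    ∀ j, Metric.ball (0 : Vec d) δ ∩ W j = ∅

/-- Condition (C4). -/
def C4 (P : Measure Ω) (X : ℕ → Ω → Vec d) (W0 : Set (Vec d))
    (W : Fin J → Set (Vec d)) : Prop :=
  (∀ j j', j ≠ j' → closure (cone (W j)) ∩ closure (cone (W j')) = {0}) ∧
  (W0 = ∅ ∨ ∀ j, closure (cone W0) ∩ closure (cone (W j)) = {0}) ∧
  (W0 = ∅ ∨ (Convex ℝ W0 ∧ (interior (cone (domConj P X)) ∩ W0).Nonempty))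

/-- The sets `W^0, W^1, …, W^J` are open and pairwise disjoint, with `W^1, …, W^J` convex. -/
def GoodSets (W0 : Set (Vec d)) (W : Fin J → Set (Vec d)) : Prop :=
  IsOpen W0 ∧ (∀ j, IsOpen (W j)) ∧ (∀ j, Convex ℝ (W j)) ∧
  (∀ j, Disjoint W0 (W j)) ∧ ∀ j j', j ≠ j' → Disjoint (W j) (W j')

/-- `β` is the optimal tilting associated with the region `Wj` (Definition 3.1). -/
def IsOptTilt (P : Measure Ω) (X : ℕ → Ω → Vec d) (Wj : Set (Vec d)) (β : Vec d) : Prop :=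
  InDom P X β ∧ cgf P X β = 0 ∧
  (∀ v ∈ Wj, ((rOf P X Wj : ℝ≥0∞) : EReal) ≤ ((⟪β, v⟫ : ℝ) : EReal)) ∧
  (∀ x : Vec d, rate P X x ≤ rOf P X Wj →
    ((⟪β, x⟫ : ℝ) : EReal) ≤ ((rOf P X Wj : ℝ≥0∞) : EReal))

/-! ### The multidimensional Siegmund problem -/

/-- The region `W^A = {x : x_k > u for k ∈ A, x_{k'} < -ℓ for k' ∉ A}`. -/
def WSieg (ℓ u : ℝ) (A : Finset (Fin d)) : Set (Vec d) :=
  {x | (∀ k ∈ A, u < x k) ∧ ∀ k ∉ A, x k < -ℓ}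

/-- `τ_b^* = min_{A ≠ ∅} τ_b^A` for the multidimensional Siegmund problem. -/
def tauSiegStar (X : ℕ → Ω → Vec d) (ℓ u b : ℝ) (ω : Ω) : ℕ∞ :=
  ⨅ (A : Finset (Fin d)) (_ : A.Nonempty), hit X (WSieg ℓ u A) b ω

/-- The wrong-exit event `{τ_b^* < τ_b^∅}`. -/
def wrongExitSieg (X : ℕ → Ω → Vec d) (ℓ u b : ℝ) : Set Ω :=
  {ω | tauSiegStar X ℓ u b ω < hit X (WSieg ℓ u ∅) b ω}

/-- The mixture estimator `Ŵ_b(Θ)` for the Siegmund problem. -/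
def WhatSieg (P : Measure Ω) (X : ℕ → Ω → Vec d) (ℓ u : ℝ) (Θ : Finset (Vec d)) (b : ℝ) :
    Ω → ℝ :=
  Set.indicator (wrongExitSieg X ℓ u b)
    (fun ω => ((Θ.card : ℝ)⁻¹ * ∑ θ ∈ Θ, LR P X θ (tauSiegStar X ℓ u b) ω)⁻¹)

/-- Asymptotic efficiency of `ℙ_Θ` for estimating `ℙ(τ_b^* < τ_b^∅)` in the Siegmund problem. -/
def AsympEffSieg (P : Measure Ω) (X : ℕ → Ω → Vec d) (ℓ u : ℝ) (Q : Vec d → Measure Ω)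
    (Θ : Finset (Vec d)) : Prop :=
  Tendsto (fun b : ℝ =>
      Real.log (mom2 (mix Q Θ) (WhatSieg P X ℓ u Θ b)) /
        (2 * Real.log ((P (wrongExitSieg X ℓ u b)).toReal)))
    atTop (nhds 1)

/-- The standing assumptions for the multidimensional Siegmund problem. -/
def SiegmundSetting (P : Measure Ω) (X : ℕ → Ω → Vec d) (ℓ u : ℝ) : Prop :=
  IIDWalk P X ∧ 0 < ℓ ∧ 0 < u ∧
  (∀ k : Fin d, ∫ ω, X 0 ω k ∂P < 0) ∧
  IsOpen {θ : Vec d | InDom P X θ} ∧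
  ∀ A : Finset (Fin d), A.Nonempty →
    (interior (cone (domConj P X)) ∩ WSieg ℓ u A).Nonempty

/-- The feasible set of the optimization problem characterizing `r_A` and `β^A`. -/
def SiegFeas (P : Measure Ω) (X : ℕ → Ω → Vec d) (A : Finset (Fin d)) (θ : Vec d) : Prop :=
  InDom P X θ ∧ cgf P X θ ≤ 0 ∧ (∀ k ∈ A, 0 ≤ θ k) ∧ ∀ k ∉ A, θ k ≤ 0

/-- The objective `u ∑_{k ∈ A} θ_k − ℓ ∑_{k' ∉ A} θ_{k'}`. -/
def SiegObj (ℓ u : ℝ) (A : Finset (Fin d)) (θ : Vec d) : ℝ :=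
  u * ∑ k ∈ A, θ k - ℓ * ∑ k ∈ Aᶜ, θ k

/-- The feasible set of the two-coordinate problem defining `s_{k,k'}` and `γ^{k,k'}`. -/
def SiegPairFeas (P : Measure Ω) (X : ℕ → Ω → Vec d) (k k' : Fin d) (θ : Vec d) : Prop :=
  InDom P X θ ∧ cgf P X θ ≤ 0 ∧ 0 ≤ θ k ∧ 0 ≤ θ k' ∧ ∀ i, i ≠ k → i ≠ k' → θ i = 0

/-- `sv` and `γ` are the optimal value and a maximizer of the two-coordinate problem
`max u(θ_k + θ_{k'})` over the feasible set `SiegPairFeas`. -/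
def IsSiegPairOpt (P : Measure Ω) (X : ℕ → Ω → Vec d) (u : ℝ) (k k' : Fin d)
    (sv : ℝ) (γ : Vec d) : Prop :=
  SiegPairFeas P X k k' γ ∧ u * (γ k + γ k') = sv ∧
  ∀ θ, SiegPairFeas P X k k' θ → u * (θ k + θ k') ≤ sv

/-- `z k` is the unique positive root of the `k`-th coordinate cgf:
`E[exp(z_k X_{1,k})] = 1`. -/
def IsCoordRoot (P : Measure Ω) (X : ℕ → Ω → Vec d) (k : Fin d) (z : ℝ) : Prop :=
  0 < z ∧ Integrable (fun ω => Real.exp (z * X 0 ω k)) P ∧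
    ∫ ω, Real.exp (z * X 0 ω k) ∂P = 1 ∧
    ∀ z' : ℝ, 0 < z' → (∫ ω, Real.exp (z' * X 0 ω k) ∂P = 1 ∧
      Integrable (fun ω => Real.exp (z' * X 0 ω k)) P) → z' = z

/-- `r_* := min_{∅ ≠ A ⊆ [d]} r_A` for the Siegmund problem. -/
def rStarSieg (P : Measure Ω) (X : ℕ → Ω → Vec d) (ℓ u : ℝ) : ℝ≥0∞ :=
  ⨅ (A : Finset (Fin d)) (_ : A.Nonempty), rOf P X (WSieg ℓ u A)

/-!
On the sign-constrained set `θ_k ≥ 0 (k ∈ A)`, `θ_{k'} ≤ 0 (k' ∉ A)`, the objective is `θ · c`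
for the corner `c` of `W^A` (`c_k = u` on `A`, `c_{k'} = -ℓ` off `A`), and it is the minimum of
`θ · x` over `cl W^A`. Hence a feasible `θ` has objective at most `I(x)` for every `x ∈ W^A`,
i.e. at most `r_A`, and at most `V_γ(x)` for `x ∈ cl W^A` when `Λ(θ - γ) ≤ 0`.
Conversely `β^A · v ≥ r_A` on the unbounded set `W^A`: along the coordinate rays that stay in
`W^A` this forces the sign constraints on `β^A`, and letting `v` tend to the corner gives
objective `≥ r_A`.
-/

lemma inner_nonneg_of_le_inner_ray {E : Type*} [NormedAddCommGroup E] [InnerProductSpace ℝ E]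
    {s : Set E} {β v w : E} {R : ℝ} (h : ∀ x ∈ s, R ≤ ⟪β, x⟫)
    (hray : ∀ t : ℝ, 0 ≤ t → v + t • w ∈ s) : 0 ≤ ⟪β, w⟫ := by
  by_contra! hneg
  have key : ∀ t : ℝ, 0 ≤ t → R ≤ ⟪β, v⟫ + t * ⟪β, w⟫ := fun t ht => by
    simpa only [inner_add_right, real_inner_smul_right] using h _ (hray t ht)
  have hv : R ≤ ⟪β, v⟫ := by simpa using key 0 le_rfl
  have := key ((⟪β, v⟫ - R + 1) / -⟪β, w⟫) (div_nonneg (by linarith) (by linarith))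
  rw [div_mul_eq_mul_div, div_neg, mul_div_cancel_right₀ _ hneg.ne] at this
  linarith

lemma le_inner_of_mem_closure {E : Type*} [NormedAddCommGroup E] [InnerProductSpace ℝ E]
    {s : Set E} {β x : E} {R : ℝ} (h : ∀ v ∈ s, R ≤ ⟪β, v⟫) (hx : x ∈ closure s) :
    R ≤ ⟪β, x⟫ :=
  closure_minimal (t := {v | R ≤ ⟪β, v⟫}) h
    (isClosed_le continuous_const (continuous_const.inner continuous_id)) hx

lemma ne_top_and_toReal_le_of_coe_ennreal_le {r : ℝ≥0∞} {a : ℝ} (h : (r : EReal) ≤ a) :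
    r ≠ ⊤ ∧ r.toReal ≤ a := by
  have hr : r ≠ ⊤ := by rintro rfl; simp at h
  rw [← EReal.coe_ennreal_toReal hr] at h
  exact ⟨hr, by exact_mod_cast h⟩

section Siegmund

variable {ℓ u : ℝ} {A : Finset (Fin d)}

lemma inner_eq_sum (x y : Vec d) : ⟪x, y⟫ = ∑ i, x i * y i := by
  simp [PiLp.inner_apply, mul_comm]

lemma siegObj_le_inner {θ x : Vec d} (hθA : ∀ k ∈ A, 0 ≤ θ k) (hθAc : ∀ k ∉ A, θ k ≤ 0)
    (hx : x ∈ WSieg ℓ u A) : SiegObj ℓ u A θ ≤ ⟪θ, x⟫ := by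
  have hsplit : ⟪θ, x⟫ = ∑ k ∈ A, θ k * x k + ∑ k ∈ Aᶜ, θ k * x k := by
    rw [inner_eq_sum, Finset.sum_add_sum_compl]
  have hobj : SiegObj ℓ u A θ = ∑ k ∈ A, θ k * u + ∑ k ∈ Aᶜ, θ k * (-ℓ) := by
    simp only [SiegObj, ← Finset.sum_mul]; ring
  rw [hsplit, hobj]
  refine add_le_add (Finset.sum_le_sum fun k hk => ?_) (Finset.sum_le_sum fun k hk => ?_)
  · exact mul_le_mul_of_nonneg_left (hx.1 k hk).le (hθA k hk)
  · exact mul_le_mul_of_nonpos_left (hx.2 k (Finset.mem_compl.mp hk)).le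
      (hθAc k (Finset.mem_compl.mp hk))

lemma siegObj_le_inner_of_mem_closure {θ x : Vec d} (hθA : ∀ k ∈ A, 0 ≤ θ k)
    (hθAc : ∀ k ∉ A, θ k ≤ 0) (hx : x ∈ closure (WSieg ℓ u A)) :
    SiegObj ℓ u A θ ≤ ⟪θ, x⟫ :=
  le_inner_of_mem_closure (fun _ hv => siegObj_le_inner hθA hθAc hv) hx

lemma siegObj_nonneg (hℓ : 0 ≤ ℓ) (hu : 0 ≤ u) {θ : Vec d} (hθA : ∀ k ∈ A, 0 ≤ θ k)
    (hθAc : ∀ k ∉ A, θ k ≤ 0) : 0 ≤ SiegObj ℓ u A θ := by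
  have hAc : ∑ k ∈ Aᶜ, θ k ≤ 0 :=
    Finset.sum_nonpos fun k hk => hθAc k (Finset.mem_compl.mp hk)
  exact sub_nonneg_of_le
    ((mul_nonpos_of_nonneg_of_nonpos hℓ hAc).trans (mul_nonneg hu (Finset.sum_nonneg hθA)))

variable (ℓ u A) in
def siegPoint (ε : ℝ) : Vec d :=
  WithLp.toLp 2 fun k => if k ∈ A then u + ε else -ℓ - ε

@[simp]
lemma siegPoint_apply (ε : ℝ) (k : Fin d) :
    siegPoint ℓ u A ε k = if k ∈ A then u + ε else -ℓ - ε := rfl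

lemma siegPoint_mem {ε : ℝ} (hε : 0 < ε) : siegPoint ℓ u A ε ∈ WSieg ℓ u A :=
  ⟨fun k hk => by simp [hk, hε], fun k hk => by simp [hk]; linarith⟩

lemma siegPoint_zero_mem_closure : siegPoint ℓ u A 0 ∈ closure (WSieg ℓ u A) := by
  have hcont : Continuous (siegPoint ℓ u A) :=
    (PiLp.continuous_toLp 2 _).comp (continuous_pi fun k => by
      by_cases hk : k ∈ A <;> simp only [hk, if_true, if_false] <;> fun_prop)
  exact mem_closure_of_tendsto ((hcont.tendsto 0).mono_left nhdsWithin_le_nhds :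
    Tendsto (siegPoint ℓ u A) (𝓝[>] 0) _)
    (eventually_nhdsWithin_of_forall fun _ hε => siegPoint_mem hε)

lemma inner_siegPoint_zero (θ : Vec d) : ⟪θ, siegPoint ℓ u A 0⟫ = SiegObj ℓ u A θ := by
  rw [inner_eq_sum, ← Finset.sum_add_sum_compl A, SiegObj, Finset.mul_sum, Finset.mul_sum,
    sub_eq_add_neg, ← Finset.sum_neg_distrib]
  congr 1 <;> refine Finset.sum_congr rfl fun k hk => ?_
  · simp [hk, mul_comm]
  · simp [Finset.mem_compl.mp hk, mul_comm]

lemma add_single_mem_WSieg {x : Vec d} (hx : x ∈ WSieg ℓ u A) {k : Fin d} {s : ℝ}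
    (hA : k ∈ A → 0 ≤ s) (hAc : k ∉ A → s ≤ 0) :
    x + EuclideanSpace.single k s ∈ WSieg ℓ u A := by
  refine ⟨fun j hj => ?_, fun j hj => ?_⟩ <;> rcases eq_or_ne j k with rfl | hjk
  · simp; linarith [hx.1 j hj, hA hj]
  · simpa [hjk] using hx.1 j hj
  · simp; linarith [hx.2 j hj, hAc hj]
  · simpa [hjk] using hx.2 j hj

lemma signs_of_le_inner {β : Vec d} {R : ℝ} (h : ∀ v ∈ WSieg ℓ u A, R ≤ ⟪β, v⟫) :
    (∀ k ∈ A, 0 ≤ β k) ∧ ∀ k ∉ A, β k ≤ 0 := by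
  have hray : ∀ k s, (k ∈ A → 0 ≤ s) → (k ∉ A → s ≤ 0) → 0 ≤ s * β k := by
    intro k s hA hAc
    have := inner_nonneg_of_le_inner_ray h (v := siegPoint ℓ u A 1)
      (w := EuclideanSpace.single k s) fun t ht => by
        have hsmul : t • EuclideanSpace.single k s = EuclideanSpace.single k (t * s) := by
          ext j; by_cases hj : j = k <;> simp [hj]
        rw [hsmul]
        exact add_single_mem_WSieg (siegPoint_mem one_pos)
          (fun hk => mul_nonneg ht (hA hk)) (fun hk => mul_nonpos_of_nonneg_of_nonpos ht (hAc hk))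
    simpa [EuclideanSpace.inner_single_right] using this
  refine ⟨fun k hk => ?_, fun k hk => ?_⟩
  · simpa using hray k 1 (fun _ => zero_le_one) (absurd hk)
  · simpa using hray k (-1) (absurd · hk) (fun _ => by norm_num)

lemma le_siegObj_of_le_inner {β : Vec d} {R : ℝ} (h : ∀ v ∈ WSieg ℓ u A, R ≤ ⟪β, v⟫) :
    R ≤ SiegObj ℓ u A β := by
  simpa only [inner_siegPoint_zero] using le_inner_of_mem_closure h siegPoint_zero_mem_closure

variable {P : Measure Ω} {X : ℕ → Ω → Vec d}

lemma ofReal_inner_le_rate {θ : Vec d} (hθ : InDom P X θ) (hθ' : cgf P X θ ≤ 0) (x : Vec d) :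
    ENNReal.ofReal ⟪θ, x⟫ ≤ rate P X x :=
  le_iSup₂ (f := fun (θ : Vec d) (_ : θ ∈ {θ : Vec d | InDom P X θ ∧ cgf P X θ ≤ 0}) =>
    ENNReal.ofReal ⟪θ, x⟫) θ ⟨hθ, hθ'⟩

lemma coe_inner_le_Vfun {γ α : Vec d} (hγ : InDom P X γ) (hαγ : InDom P X (α - γ))
    (hsum : cgf P X γ + cgf P X (α - γ) ≤ 0) (x : Vec d) :
    ((⟪α, x⟫ : ℝ) : EReal) ≤ Vfun P X γ x :=
  le_iSup₂ (f := fun (α : Vec d) (_ : α ∈ {α : Vec d | InDom P X γ ∧ InDom P X (α - γ) ∧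
    cgf P X γ + cgf P X (α - γ) ≤ 0}) => ((⟪α, x⟫ : ℝ) : EReal)) α ⟨hγ, hαγ, hsum⟩

lemma ofReal_siegObj_le_rOf {θ : Vec d} (hθ : SiegFeas P X A θ) :
    ENNReal.ofReal (SiegObj ℓ u A θ) ≤ rOf P X (WSieg ℓ u A) :=
  le_iInf₂ fun x hx => (ENNReal.ofReal_le_ofReal (siegObj_le_inner hθ.2.2.1 hθ.2.2.2 hx)).trans
    (ofReal_inner_le_rate hθ.1 hθ.2.1 x)

theorem IsOptTilt.siegmund_optimal {β : Vec d} (hβ : IsOptTilt P X (WSieg ℓ u A) β) :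
    (∀ θ : Vec d, SiegFeas P X A θ →
        ENNReal.ofReal (SiegObj ℓ u A θ) ≤ rOf P X (WSieg ℓ u A)) ∧
      SiegFeas P X A β ∧ ENNReal.ofReal (SiegObj ℓ u A β) = rOf P X (WSieg ℓ u A) := by
  obtain ⟨hdom, hcgf, hlow, -⟩ := hβ
  have hne := (ne_top_and_toReal_le_of_coe_ennreal_le (hlow _ (siegPoint_mem one_pos))).1
  have hbound : ∀ v ∈ WSieg ℓ u A, (rOf P X (WSieg ℓ u A)).toReal ≤ ⟪β, v⟫ :=
    fun v hv => (ne_top_and_toReal_le_of_coe_ennreal_le (hlow v hv)).2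
  have hfeas : SiegFeas P X A β := ⟨hdom, hcgf.le, signs_of_le_inner hbound⟩
  refine ⟨fun θ hθ => ofReal_siegObj_le_rOf hθ, hfeas,
    le_antisymm (ofReal_siegObj_le_rOf hfeas) ?_⟩
  rw [← ENNReal.ofReal_toReal hne]
  exact ENNReal.ofReal_le_ofReal (le_siegObj_of_le_inner hbound)

lemma ofReal_siegObj_le_vOf (hℓ : 0 ≤ ℓ) (hu : 0 ≤ u) {γ θ : Vec d} (hγ : InDom P X γ)
    (hγ' : cgf P X γ ≤ 0) (hθγ : InDom P X (θ - γ)) (hθγ' : cgf P X (θ - γ) ≤ 0)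
    (hθA : ∀ k ∈ A, 0 ≤ θ k) (hθAc : ∀ k ∉ A, θ k ≤ 0) :
    ((ENNReal.ofReal (SiegObj ℓ u A θ) : ℝ≥0∞) : EReal) ≤ vOf P X (WSieg ℓ u A) γ := by
  rw [EReal.coe_ennreal_ofReal, max_eq_left (siegObj_nonneg hℓ hu hθA hθAc)]
  exact le_iInf₂ fun x hx =>
    (EReal.coe_le_coe_iff.2 (siegObj_le_inner_of_mem_closure hθA hθAc hx)).trans
      (coe_inner_le_Vfun hγ hθγ (by linarith) x)

end Siegmund

theorem statement7_general
    {d : ℕ} {Ω : Type*} [MeasurableSpace Ω] (P : Measure Ω) (X : ℕ → Ω → Vec d)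
    (ℓ u : ℝ) (hS : SiegmundSetting P X ℓ u)
    (A : Finset (Fin d))
    (βA : Vec d) (hβA : IsOptTilt P X (WSieg ℓ u A) βA) :
    -- (i) `r_A` and `β^A` are the optimal value and an optimal solution
    ((∀ θ : Vec d, SiegFeas P X A θ →
        ENNReal.ofReal (SiegObj ℓ u A θ) ≤ rOf P X (WSieg ℓ u A)) ∧
      SiegFeas P X A βA ∧
      ENNReal.ofReal (SiegObj ℓ u A βA) = rOf P X (WSieg ℓ u A)) ∧
    -- (ii) lower bound on `v_A(γ)`
    (∀ γ : Vec d, InDom P X γ → cgf P X γ ≤ 0 →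
      ∀ θ : Vec d, InDom P X (θ - γ) → cgf P X (θ - γ) ≤ 0 →
        (∀ k ∈ A, 0 ≤ θ k) → (∀ k ∉ A, θ k ≤ 0) →
        ((ENNReal.ofReal (SiegObj ℓ u A θ) : ℝ≥0∞) : EReal)
          ≤ vOf P X (WSieg ℓ u A) γ) := by
  obtain ⟨-, hℓ, hu, -⟩ := hS
  exact ⟨hβA.siegmund_optimal, fun _ hγ hγ' _ hθγ hθγ' hθA hθAc =>
    ofReal_siegObj_le_vOf hℓ.le hu.le hγ hγ' hθγ hθγ' hθA hθAc⟩

theorem statement7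
    {d : ℕ} {Ω : Type*} [MeasurableSpace Ω] (P : Measure Ω) (X : ℕ → Ω → Vec d)
    (ℓ u : ℝ) (hS : SiegmundSetting P X ℓ u)
    (A : Finset (Fin d)) (hA : A.Nonempty)
    (βA : Vec d) (hβA : IsOptTilt P X (WSieg ℓ u A) βA) :
    -- (i) `r_A` and `β^A` are the optimal value and an optimal solution
    ((∀ θ : Vec d, SiegFeas P X A θ →
        ENNReal.ofReal (SiegObj ℓ u A θ) ≤ rOf P X (WSieg ℓ u A)) ∧
      SiegFeas P X A βA ∧
      ENNReal.ofReal (SiegObj ℓ u A βA) = rOf P X (WSieg ℓ u A)) ∧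
    -- (ii) lower bound on `v_A(γ)`
    (∀ γ : Vec d, InDom P X γ → cgf P X γ ≤ 0 →
      ∀ θ : Vec d, InDom P X (θ - γ) → cgf P X (θ - γ) ≤ 0 →
        (∀ k ∈ A, 0 ≤ θ k) → (∀ k ∉ A, θ k ≤ 0) →
        ((ENNReal.ofReal (SiegObj ℓ u A θ) : ℝ≥0∞) : EReal)
          ≤ vOf P X (WSieg ℓ u A) γ) :=
  statement7_general P X ℓ u hS A βA hβA

end Paper
end
end

section
/- Let 2 ≤ L < d and let θ ∈ ℝ^d satisfy θ_1 ≥ θ_2 ≥ … ≥ θ_d ≥ 0. Consider the linear program: minimize θ·x over x ∈ ℝ^d subject to x_k ≥ 0 for every k ∈ [d] and Σ_{k∈B} x_k ≥ 1 for every B ⊆ [d] with |B| = L. Setting θ̃_L := Σ_{k=L}^d θ_k, the optimal value equals min{ θ̃_L, (θ̃_L + θ_{L−1})/2, (θ̃_L + θ_{L−1} + θ_{L−2})/3, …, (θ̃_L + θ_{L−1} + … + θ_1)/L }. -/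
/-!
Sorting a feasible `x` increasingly can only decrease `θ ⬝ x` (rearrangement inequality), and the
sorted vector `y` still satisfies `∑_{i<L} y_i ≥ 1`. For increasing `y ≥ 0`, Abel summation shows
`θ ⬝ y ≥ m ∑_{i<L} y_i` as soon as every tail sum of `θ_i - m [i < L]` is nonnegative; for `m`
the claimed minimum the tail sum from `k < L` is `∑_{i ≥ k} θ_i - m (L - k) ≥ 0`. The minimum
is attained at `x = j⁻¹ [i ≥ L - j]`, since every `L`-set contains at least `j` indices `≥ L - j`.
-/

noncomputable section

open Finset

namespace Fin

theorem sum_mul_nonneg_of_sum_Ici_nonneg {R : Type*} [Ring R] [PartialOrder R]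
    [IsOrderedRing R] {n : ℕ} {f y : Fin n → R} (hy : Monotone y) (hy0 : 0 ≤ y)
    (hf : ∀ k, 0 ≤ ∑ i ∈ Ici k, f i) : 0 ≤ ∑ i, f i * y i := by
  induction n with
  | zero => simp
  | succ n ih =>
    have hsplit : ∑ i, f i * y i
        = (∑ i, f i) * y 0 + ∑ i : Fin n, f i.succ * (y i.succ - y 0) := by
      simp only [Fin.sum_univ_succ, mul_sub, sum_sub_distrib, add_mul, sum_mul]
      abel
    have htail (k : Fin n) : ∑ i ∈ Ici k, f i.succ = ∑ i ∈ Ici k.succ, f i := by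
      rw [← Fin.finsetImage_succ_Ici, sum_image fun _ _ _ _ h => Fin.succ_injective _ h]
    rw [hsplit]
    refine add_nonneg (mul_nonneg (by simpa using hf 0) (hy0 0)) (ih (fun i j hij => ?_)
      (fun i => ?_) (fun k => (htail k).symm ▸ hf k.succ))
    · exact sub_le_sub_right (hy (Fin.succ_le_succ_iff.2 hij)) _
    · exact sub_nonneg.2 (hy (Fin.zero_le _))

theorem card_filter_Ici_val_lt {d L : ℕ} (hL : L ≤ d) (k : Fin d) :
    #{i ∈ Ici k | i.val < L} = L - k := by
  rw [← Nat.card_Ico]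
  apply card_nbij Fin.val
  · intro i hi
    obtain ⟨hki, hiL⟩ : k ≤ i ∧ i.val < L := by simpa using hi
    exact mem_Ico.2 ⟨hki, hiL⟩
  · exact fun i _ j _ h => Fin.ext h
  · intro n hn
    obtain ⟨hkn, hnL⟩ := mem_Ico.1 hn
    exact ⟨⟨n, by omega⟩, mem_filter.2 ⟨mem_Ici.2 hkn, hnL⟩, rfl⟩

theorem card_sub_le_card_filter_le_val {d : ℕ} (B : Finset (Fin d)) (a : ℕ) :
    #B - a ≤ #{k ∈ B | a ≤ k.val} := by
  have hlow : #{k ∈ B | ¬ a ≤ k.val} ≤ a := calc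
    _ ≤ #{k : Fin d | k.val < a} := card_le_card fun k hk => by
        simp only [mem_filter, not_le, mem_univ, true_and] at hk ⊢
        exact hk.2
    _ = min d a := Fin.card_filter_val_lt
    _ ≤ a := min_le_right _ _
  have := card_filter_add_card_filter_not (s := B) (fun k => a ≤ k.val)
  omega

end Fin

namespace Paper

/-- With `0`-based indices the paper's `θ̃_L + θ_{L-1} + ⋯ + θ_{L-j+1}` is `tailSum θ (L - j)`. -/
def tailSum {d : ℕ} (θ : Fin d → ℝ) (a : ℕ) : ℝ := ∑ i : Fin d, if a ≤ (i : ℕ) then θ i else 0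

theorem tailSum_nonneg {d : ℕ} {θ : Fin d → ℝ} (hθ : 0 ≤ θ) (a : ℕ) : 0 ≤ tailSum θ a :=
  sum_nonneg fun i _ => ite_nonneg (hθ i) le_rfl

theorem tailSum_eq_sum_Ici {d : ℕ} (θ : Fin d → ℝ) (k : Fin d) :
    tailSum θ k = ∑ i ∈ Ici k, θ i := by
  simp only [tailSum, ← Fin.le_def, ← sum_filter, filter_le_eq_Ici]

theorem one_le_sum_ite_inv_of_card_eq {d L j : ℕ} (hj : 1 ≤ j) (hjL : j ≤ L)
    {B : Finset (Fin d)} (hB : #B = L) : 1 ≤ ∑ k ∈ B, if L - j ≤ k.val then (j : ℝ)⁻¹ else 0 := by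
  have hcard : (j : ℝ) ≤ #{k ∈ B | L - j ≤ k.val} := by
    have := Fin.card_sub_le_card_filter_le_val B (L - j)
    exact_mod_cast (show j ≤ _ by omega)
  have hj0 : (0 : ℝ) < j := by exact_mod_cast hj
  rw [← sum_filter, sum_const, nsmul_eq_mul]
  calc (1 : ℝ) = j * (j : ℝ)⁻¹ := (mul_inv_cancel₀ hj0.ne').symm
    _ ≤ _ := mul_le_mul_of_nonneg_right hcard (inv_nonneg.2 hj0.le)

theorem mul_sum_val_lt_le_sum_mul {d L : ℕ} (hLd : L ≤ d) {θ y : Fin d → ℝ} (hθ : 0 ≤ θ)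
    {m : ℝ} (hm : ∀ j, 1 ≤ j → j ≤ L → m * j ≤ tailSum θ (L - j)) (hy : Monotone y)
    (hy0 : 0 ≤ y) : m * ∑ i with i.val < L, y i ≤ ∑ i, θ i * y i := by
  have key := Fin.sum_mul_nonneg_of_sum_Ici_nonneg
    (f := fun i => θ i - if i.val < L then m else 0) hy hy0 fun k => ?_
  · simp only [sub_mul, sum_sub_distrib, ite_mul, zero_mul, ← sum_filter, ← mul_sum] at key
    linarith
  · rw [sum_sub_distrib, ← sum_filter, sum_const, nsmul_eq_mul, Fin.card_filter_Ici_val_lt hLd,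
      sub_nonneg, ← tailSum_eq_sum_Ici]
    rcases lt_or_ge k.val L with hk | hk
    · simpa [Nat.sub_sub_self hk.le, Nat.cast_sub hk.le, mul_comm] using
        hm (L - k) (by omega) (by omega)
    · rw [Nat.sub_eq_zero_of_le hk, Nat.cast_zero, zero_mul]
      exact tailSum_nonneg hθ _

theorem le_sum_mul_of_forall_card_eq {d L : ℕ} (hLd : L ≤ d) {θ : Fin d → ℝ}
    (hθ : Antitone θ) (hθ0 : 0 ≤ θ) {m : ℝ} (hm0 : 0 ≤ m)
    (hm : ∀ j, 1 ≤ j → j ≤ L → m * j ≤ tailSum θ (L - j)) {x : Fin d → ℝ} (hx0 : 0 ≤ x)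
    (hx : ∀ B : Finset (Fin d), #B = L → 1 ≤ ∑ k ∈ B, x k) :
    m ≤ ∑ i, θ i * x i := by
  set σ := Tuple.sort x
  have hsorted : Monotone (x ∘ σ) := Tuple.monotone_sort x
  have hfirst : 1 ≤ ∑ i with i.val < L, x (σ i) := by
    have := hx ((univ.filter fun i : Fin d => i.val < L).map σ.toEmbedding)
      (by rw [card_map, Fin.card_filter_val_lt, min_eq_right hLd])
    rwa [sum_map] at this
  have hrearr : ∑ i, θ i * x (σ i) ≤ ∑ i, θ i * x i := by
    simpa using (hθ.antivary hsorted).sum_mul_le_sum_mul_comp_perm (σ := σ.symm)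
  calc m = m * 1 := (mul_one m).symm
    _ ≤ m * ∑ i with i.val < L, x (σ i) := mul_le_mul_of_nonneg_left hfirst hm0
    _ ≤ ∑ i, θ i * x (σ i) := mul_sum_val_lt_le_sum_mul hLd hθ0 hm hsorted fun i => hx0 (σ i)
    _ ≤ ∑ i, θ i * x i := hrearr

theorem exists_feasible_sum_mul_eq {d L j : ℕ} (θ : Fin d → ℝ) (hj : 1 ≤ j) (hjL : j ≤ L) :
    ∃ x : Fin d → ℝ, (∀ k, 0 ≤ x k) ∧ (∀ B : Finset (Fin d), #B = L → 1 ≤ ∑ k ∈ B, x k) ∧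
      (j : ℝ)⁻¹ * tailSum θ (L - j) = ∑ i, θ i * x i := by
  refine ⟨fun i => if L - j ≤ i.val then (j : ℝ)⁻¹ else 0,
    fun k => ite_nonneg (by positivity) le_rfl,
    fun B hB => one_le_sum_ite_inv_of_card_eq hj hjL hB, ?_⟩
  rw [tailSum, mul_sum]
  refine sum_congr rfl fun i _ => ?_
  by_cases h : L - j ≤ (i : ℕ) <;> simp [h, mul_comm]

theorem statement18
    (d L : ℕ) (hL2 : 2 ≤ L) (hLd : L < d) (θ : Fin d → ℝ)
    (hmono : ∀ i j : Fin d, i ≤ j → θ j ≤ θ i)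
    (hnonneg : ∀ i, 0 ≤ θ i) :
    IsLeast
      {v : ℝ | ∃ x : Fin d → ℝ,
        (∀ k, 0 ≤ x k) ∧
        (∀ B : Finset (Fin d), B.card = L → 1 ≤ ∑ k ∈ B, x k) ∧
        v = ∑ i, θ i * x i}
      (sInf {v : ℝ | ∃ j : ℕ, 1 ≤ j ∧ j ≤ L ∧
        v = (j : ℝ)⁻¹ * ∑ i : Fin d, if L - j ≤ (i : ℕ) then θ i else 0}) := by
  set T := {v : ℝ | ∃ j : ℕ, 1 ≤ j ∧ j ≤ L ∧ v = (j : ℝ)⁻¹ * tailSum θ (L - j)}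
  have hT : T.Finite :=
    ((Set.finite_Icc 1 L).image fun j : ℕ => (j : ℝ)⁻¹ * tailSum θ (L - j)).subset
      fun _ ⟨j, hj1, hjL, hv⟩ => ⟨j, ⟨hj1, hjL⟩, hv.symm⟩
  have hmin (j : ℕ) (hj1 : 1 ≤ j) (hjL : j ≤ L) : sInf T * j ≤ tailSum θ (L - j) := by
    have hj0 : (0 : ℝ) < j := by exact_mod_cast hj1
    rw [← le_div_iff₀ hj0, div_eq_inv_mul]
    exact csInf_le hT.bddBelow ⟨j, hj1, hjL, rfl⟩
  obtain ⟨j, hj1, hjL, hj⟩ := (show T.Nonempty from ⟨_, 1, le_rfl, by omega, rfl⟩).csInf_mem hT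
  obtain ⟨x, hx0, hx, hval⟩ := exists_feasible_sum_mul_eq θ hj1 hjL
  refine ⟨⟨x, hx0, hx, hj.trans hval⟩, ?_⟩
  rintro _ ⟨y, hy0, hy, rfl⟩
  have hm0 : 0 ≤ sInf T := hj ▸ mul_nonneg (by positivity) (tailSum_nonneg hnonneg _)
  exact le_sum_mul_of_forall_card_eq hLd.le hmono hnonneg hm0 hmin hy0 hy

end Paper
end
end
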